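/- arXiv:math/0306349 — 3 statements merged into one kernel-verified Lean document; each statement's English description precedes it below -/
import Mathlib

section
/- Let (R, m) be a Noetherian local ring and let c be a closure operation on ideals of R (i.e., I ⊆ c(I), c is monotone, and c(c(I)) = c(I)). Suppose x₁,…,x_d is a system of parameters of R satisfying the colon-capturing property: c((x₁^{t+s}, x₂,…,x_d)) : x₁^t ⊆ c((x₁^s, x₂,…,x_d)) for all positive integers t, s. Then for every k ≥ 1, the colength satisfies λ(R / c((x₁^k, x₂,…,x_d))) ≥ k · λ(R / c((x₁,…,x_d))). -/
open IsLocalRing Filter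

set_option linter.unusedVariables false

/-- The length of an `R`-module `M`, defined as the Krull dimension of its submodule
lattice (valued in `ℕ∞`; the lattice is never empty so `unbot'` is harmless). -/
noncomputable def mLength (R M : Type*) [Ring R] [AddCommGroup M] [Module R M] : ℕ∞ :=
  WithBot.unbotD 0 (Order.krullDim (Submodule R M))

/-- The length `λ(B/A)` of the subquotient of two ideals `A ≤ B`. -/
noncomputable def qLength (R : Type*) [CommRing R] (A B : Ideal R) : ℕ∞ :=
  mLength R (↥B ⧸ (Submodule.comap B.subtype A))

/-- The ideal `(x₁^{k₁}, …, x_d^{k_d})`. -/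
def spow {R : Type*} [CommRing R] {d : ℕ} (x : Fin d → R) (k : Fin d → ℕ) : Ideal R :=
  Ideal.span (Set.range fun i => x i ^ k i)

/-- `x₁, …, x_d` is a system of parameters: `d = dim R` and the ideal it generates is
`m`-primary (radical equal to the maximal ideal). -/
def IsSOP (R : Type*) [CommRing R] [IsLocalRing R] {d : ℕ} (x : Fin d → R) : Prop :=
  ringKrullDim R = d ∧ (Ideal.span (Set.range x)).radical = maximalIdeal R

/-- A parameter ideal: an ideal generated by a full system of parameters. -/
def IsParameterIdeal (R : Type*) [CommRing R] [IsLocalRing R] (I : Ideal R) : Prop :=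
  ∃ (d : ℕ) (x : Fin d → R), IsSOP R x ∧ I = Ideal.span (Set.range x)

/-- The Frobenius power `I^{[q]}`, generated by `q`-th powers of elements of `I`. -/
def frobPow {R : Type*} [CommRing R] (q : ℕ) (I : Ideal R) : Ideal R :=
  Ideal.span ((fun a => a ^ q) '' (I : Set R))

/-- Tight closure of an ideal in a ring of characteristic `p`. -/
def tightClosure {R : Type*} [CommRing R] (p : ℕ) (I : Ideal R) : Set R :=
  {x | ∃ c : R, (∀ P ∈ minimalPrimes R, c ∉ P) ∧
    ∃ N : ℕ, ∀ e ≥ N, c * x ^ p ^ e ∈ frobPow (p ^ e) I}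

/-- A test element: an element of `R°` multiplying the tight closure of every ideal
back into the ideal. -/
def IsTestElement {R : Type*} [CommRing R] (p : ℕ) (c : R) : Prop :=
  (∀ P ∈ minimalPrimes R, c ∉ P) ∧ ∀ I : Ideal R, ∀ x ∈ tightClosure p I, c * x ∈ I


section Auxiliary

lemma mLength_eq_iSup' (R M : Type*) [Ring R] [AddCommGroup M] [Module R M] :
    mLength R M = ⨆ p : LTSeries (Submodule R M), (p.length : ℕ∞) := by
  haveI : Nonempty (Submodule R M) := ⟨⊥⟩
  rw [mLength, Order.krullDim_eq_iSup_length, WithBot.unbotD_coe]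

lemma length_le_mLength' {R M : Type*} [Ring R] [AddCommGroup M] [Module R M]
    (p : LTSeries (Submodule R M)) : (p.length : ℕ∞) ≤ mLength R M := by
  rw [mLength_eq_iSup']
  exact le_iSup (fun p : LTSeries (Submodule R M) => (p.length : ℕ∞)) p

lemma exists_series_of_le' {α : Type*} [PartialOrder α] (p q : LTSeries α) (h : p.last ≤ q.head) :
    ∃ r : LTSeries α, p.length + q.length ≤ r.length := by
  rcases h.lt_or_eq with h | h
  · exact ⟨p.append q h, by rw [RelSeries.append_length]; omega⟩
  · exact ⟨p.smash q h, le_of_eq (RelSeries.smash_length p q h).symm⟩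

lemma mLength_superadditive_key {R : Type*} [CommRing R] (A B C : Ideal R) (y : R)
    (hAC : A ≤ C) (hyC : y ∈ C)
    (hcolon : ∀ a : R, y * a ∈ A → a ∈ B) :
    mLength R (R ⧸ C) + mLength R (R ⧸ B) ≤ mLength R (R ⧸ A) := by
  haveI : Nonempty (LTSeries (Submodule R (R ⧸ C))) := ⟨RelSeries.singleton _ ⊥⟩
  haveI : Nonempty (LTSeries (Submodule R (R ⧸ B))) := ⟨RelSeries.singleton _ ⊥⟩
  rw [mLength_eq_iSup' R (R ⧸ C), mLength_eq_iSup' R (R ⧸ B), ENat.iSup_add]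
  refine iSup_le fun p => ?_
  rw [ENat.add_iSup]
  refine iSup_le fun q => ?_
  set eA := Submodule.comapMkQRelIso A with heA
  set eB := Submodule.comapMkQRelIso B with heB
  set eC := Submodule.comapMkQRelIso C with heC
  set F : Ideal R → Ideal R := fun J => Ideal.span {y} * J ⊔ A with hF
  have hFstrict : ∀ J J' : Ideal R, B ≤ J → J < J' → F J < F J' := by
    intro J J' hBJ h
    refine lt_of_le_of_ne (sup_le_sup_right (Ideal.mul_mono_right h.le) A) ?_
    intro heq
    obtain ⟨a, haJ', haJ⟩ := SetLike.exists_of_lt h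
    have hya : y * a ∈ F J' :=
      le_sup_left (α := Ideal R) (Ideal.mul_mem_mul (Ideal.subset_span rfl) haJ')
    rw [← heq] at hya
    obtain ⟨z, hz, w, hw, hzw⟩ := Submodule.mem_sup.mp hya
    obtain ⟨b, hbJ, hbz⟩ := Ideal.mem_span_singleton_mul.mp hz
    have : y * (a - b) ∈ A := by
      have : y * (a - b) = w := by linear_combination -hzw - hbz
      rw [this]; exact hw
    exact haJ (by simpa using J.add_mem (hBJ (hcolon _ this)) hbJ)
  have hmapq : StrictMono (fun S : Submodule R (R ⧸ B) => (⟨F (eB S).1, le_sup_right⟩ :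
      {J : Ideal R // A ≤ J})) := by
    intro S S' h
    exact Subtype.mk_lt_mk.mpr (hFstrict _ _ (eB S).2 (eB.strictMono h))
  have hmapp : StrictMono (fun S : Submodule R (R ⧸ C) => (⟨(eC S).1, hAC.trans (eC S).2⟩ :
      {J : Ideal R // A ≤ J})) := by
    intro S S' h
    exact Subtype.mk_lt_mk.mpr (eC.strictMono h)
  set qc : LTSeries {J : Ideal R // A ≤ J} := q.map _ hmapq with hqc
  set pc : LTSeries {J : Ideal R // A ≤ J} := p.map _ hmapp with hpc
  have hjunction : qc.last ≤ pc.head := by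
    show (⟨F (eB q.last).1, _⟩ : {J : Ideal R // A ≤ J}) ≤ ⟨(eC p.head).1, _⟩
    show F (eB q.last).1 ≤ (eC p.head).1
    refine le_trans (sup_le (le_trans Ideal.mul_le_left ?_) hAC) (eC p.head).2
    exact Ideal.span_le.mpr (Set.singleton_subset_iff.mpr hyC)
  obtain ⟨r, hr⟩ := exists_series_of_le' qc pc hjunction
  have hlen : (p.length + q.length : ℕ∞) ≤ (r.length : ℕ∞) := by
    have : qc.length = q.length := rfl
    have : pc.length = p.length := rfl
    exact_mod_cast by omega
  refine le_trans hlen ?_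
  exact length_le_mLength' (r.map eA.symm eA.symm.strictMono)

end Auxiliary

/-- colength inequality for one power, for an abstract closure operation
with colon-capturing in the first coordinate. -/
theorem stmt0 (R : Type*) [CommRing R] [IsNoetherianRing R] [IsLocalRing R]
    (c : Ideal R → Ideal R)
    (hext : ∀ I : Ideal R, I ≤ c I)
    (hmono : ∀ I J : Ideal R, I ≤ J → c I ≤ c J)
    (hidem : ∀ I : Ideal R, c (c I) = c I)
    (d : ℕ) (hd : 0 < d) (x : Fin d → R) (hx : IsSOP R x)
    (hcc : ∀ t s : ℕ, 0 < t → 0 < s →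
      Submodule.colon (c (spow x (Function.update (fun _ => 1) ⟨0, hd⟩ (t + s))))
          (Ideal.span {x ⟨0, hd⟩ ^ t})
        ≤ c (spow x (Function.update (fun _ => 1) ⟨0, hd⟩ s)))
    (k : ℕ) (hk : 1 ≤ k) :
    mLength R (R ⧸ c (spow x (Function.update (fun _ => 1) ⟨0, hd⟩ k)))
      ≥ (k : ℕ∞) * mLength R (R ⧸ c (spow x (fun _ => 1))) := by
  set i0 : Fin d := ⟨0, hd⟩ with hi0
  have hone : Function.update (fun _ : Fin d => 1) i0 1 = fun _ => 1 :=
    Function.update_eq_self i0 fun _ => 1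
  induction k, hk using Nat.le_induction with
  | base =>
    rw [hone, Nat.cast_one, one_mul]
  | succ k hk IH =>
    have hIle : spow x (Function.update (fun _ => 1) i0 (k + 1))
        ≤ spow x (Function.update (fun _ => 1) i0 k) := by
      rw [spow, Ideal.span_le]
      rintro _ ⟨i, rfl⟩
      by_cases hi : i = i0
      · subst hi
        simp only [Function.update_self]
        rw [pow_succ]
        exact Ideal.mul_mem_right _ _
          (Ideal.subset_span ⟨i0, by simp⟩)
      · exact Ideal.subset_span ⟨i, by simp [Function.update_of_ne hi]⟩
    have hAC : c (spow x (Function.update (fun _ => 1) i0 (k + 1)))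
        ≤ c (spow x (Function.update (fun _ => 1) i0 k)) := hmono _ _ hIle
    have hyC : x i0 ^ k ∈ c (spow x (Function.update (fun _ => 1) i0 k)) :=
      hext _ (Ideal.subset_span ⟨i0, by simp⟩)
    have hcolon : ∀ a : R, x i0 ^ k * a ∈ c (spow x (Function.update (fun _ => 1) i0 (k + 1))) →
        a ∈ c (spow x (fun _ => 1)) := by
      intro a ha
      have := hcc k 1 hk one_pos
      rw [hone] at this
      exact this (Ideal.mem_colon_span_singleton.mpr (by rwa [mul_comm] at ha))
    have hkey := mLength_superadditive_key _ (c (spow x (fun _ => 1))) _ (x i0 ^ k) hAC hyC hcolon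
    calc ((k + 1 : ℕ) : ℕ∞) * mLength R (R ⧸ c (spow x (fun _ => 1)))
        = (k : ℕ∞) * mLength R (R ⧸ c (spow x (fun _ => 1)))
            + mLength R (R ⧸ c (spow x (fun _ => 1))) := by
          push_cast; rw [add_mul, one_mul]
      _ ≤ mLength R (R ⧸ c (spow x (Function.update (fun _ => 1) i0 k)))
            + mLength R (R ⧸ c (spow x (fun _ => 1))) := add_le_add_left IH _
      _ ≤ mLength R (R ⧸ c (spow x (Function.update (fun _ => 1) i0 (k + 1)))) := hkey
end

section
/- Let (R, m) be a Noetherian local ring of dimension d, positive characteristic p, and let c be a closure operation on ideals such that for every system of parameters x₁,…,x_d and all t, s ≥ 1 one has c((x₁^{t+s}, x₂,…,x_d)) : x₁^t ⊆ c((x₁^s, x₂,…,x_d)) (and similarly in each coordinate). Then for every system of parameters x₁,…,x_d and all k₁,…,k_d ≥ 1: λ(R / c((x₁^{k₁},…,x_d^{k_d}))) ≥ k₁⋯k_d · λ(R / c((x₁,…,x_d))). -/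
open IsLocalRing Filter

set_option linter.unusedVariables false

section helpers

lemma unbot'_zero_mono {a b : WithBot ℕ∞} (h : a ≤ b) : WithBot.unbotD 0 a ≤ WithBot.unbotD 0 b := by
  cases a with
  | bot => simp
  | coe a =>
    cases b with
    | bot => exact absurd h (by simp)
    | coe b => simpa using h

lemma unbot'_zero_le {a : WithBot ℕ∞} {n : ℕ∞} (h : a ≤ (n : WithBot ℕ∞)) :
    WithBot.unbotD 0 a ≤ n := by
  cases a with
  | bot => simp
  | coe a => simpa using h

lemma mLength_eq_of_linearEquiv {R M M' : Type*} [CommRing R] [AddCommGroup M] [Module R M]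
    [AddCommGroup M'] [Module R M'] (e : M ≃ₗ[R] M') : mLength R M = mLength R M' := by
  unfold mLength
  rw [Order.krullDim_eq_of_orderIso (Submodule.orderIsoMapComap e)]

lemma mLength_le_height {R M : Type*} [CommRing R] [AddCommGroup M] [Module R M]
    (P : Submodule R M) : mLength R P ≤ Order.height P := by
  apply unbot'_zero_le
  apply iSup_le
  intro p
  have hsm : StrictMono (fun q : Submodule R P => Submodule.map P.subtype q) :=
    (Submodule.MapSubtype.orderEmbedding P).strictMono
  have h := Order.length_le_height (p := p.map _ hsm) (x := P)
    (by rw [LTSeries.last_map]; exact Submodule.map_subtype_le P _)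
  have hlen : (p.map _ hsm).length = p.length := rfl
  rw [hlen] at h
  exact_mod_cast h

lemma mLength_quotient_le_coheight {R M : Type*} [CommRing R] [AddCommGroup M] [Module R M]
    (P : Submodule R M) : mLength R (M ⧸ P) ≤ Order.coheight P := by
  apply unbot'_zero_le
  apply iSup_le
  intro p
  have hsm : StrictMono (fun q : Submodule R (M ⧸ P) => Submodule.comap P.mkQ q) :=
    Monotone.strictMono_of_injective (fun _ _ h => Submodule.comap_mono h)
      (Submodule.comap_injective_of_surjective (Submodule.mkQ_surjective P))
  have h := Order.length_le_coheight (x := P) (p := p.map _ hsm)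
    (by rw [LTSeries.head_map]
        exact le_trans (Submodule.ker_mkQ P).ge (Submodule.comap_mono bot_le))
  have hlen : (p.map _ hsm).length = p.length := rfl
  rw [hlen] at h
  exact_mod_cast h

lemma mLength_mono {R : Type*} [CommRing R] {A B : Ideal R} (h : A ≤ B) :
    mLength R (R ⧸ B) ≤ mLength R (R ⧸ A) := by
  have hAB : A ≤ Submodule.comap (LinearMap.id (R := R)) B := h
  set f := Submodule.mapQ A B LinearMap.id hAB with hf
  have hsurj : Function.Surjective f := by
    intro y
    obtain ⟨r, rfl⟩ := Submodule.Quotient.mk_surjective B y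
    exact ⟨Submodule.Quotient.mk r, by rw [hf, Submodule.mapQ_apply]; rfl⟩
  have hsm : StrictMono (fun q : Submodule R (R ⧸ B) => Submodule.comap f q) :=
    Monotone.strictMono_of_injective (fun _ _ h => Submodule.comap_mono h)
      (Submodule.comap_injective_of_surjective hsurj)
  exact unbot'_zero_mono (Order.krullDim_le_of_strictMono _ hsm)

end helpers

lemma key_lemma {R : Type*} [CommRing R] (A T S : Ideal R) (y : R)
    (hT : A ⊔ Ideal.span {y} ≤ T) (hS : Submodule.colon A (Ideal.span {y}) ≤ S) :
    mLength R (R ⧸ S) + mLength R (R ⧸ T) ≤ mLength R (R ⧸ A) := by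
  classical
  set N : Submodule R (R ⧸ A) := Submodule.map A.mkQ (Ideal.span {y}) with hN
  have h1 : mLength R (R ⧸ S) ≤ Order.height N := by
    refine le_trans (mLength_mono hS) ?_
    set φ : R →ₗ[R] R ⧸ A := A.mkQ ∘ₗ LinearMap.toSpanSingleton R R y with hφ
    have hker : LinearMap.ker φ = Submodule.colon A (Ideal.span {y}) := by
      ext r
      rw [LinearMap.mem_ker, hφ, LinearMap.comp_apply, LinearMap.toSpanSingleton_apply,
        Submodule.mkQ_apply, Submodule.Quotient.mk_eq_zero, ← Ideal.submodule_span_eq,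
        Submodule.mem_colon_span_singleton]
    have hrange : LinearMap.range φ = N := by
      rw [hφ, LinearMap.range_comp, ← LinearMap.span_singleton_eq_range, hN,
        ← Ideal.submodule_span_eq]
    calc mLength R (R ⧸ Submodule.colon A (Ideal.span {y}))
        = mLength R (R ⧸ LinearMap.ker φ) := by rw [hker]
      _ = mLength R ↥(LinearMap.range φ) := mLength_eq_of_linearEquiv φ.quotKerEquivRange
      _ = mLength R ↥N := by rw [hrange]
      _ ≤ Order.height N := mLength_le_height N
  have h2 : mLength R (R ⧸ T) ≤ Order.coheight N := by
    refine le_trans (mLength_mono hT) ?_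
    set B : Ideal R := A ⊔ Ideal.span {y} with hB
    have hAB : A ≤ B := le_sup_left
    have hNN' : N ≤ Submodule.map A.mkQ B := Submodule.map_mono le_sup_right
    refine le_trans ?_ (Order.coheight_anti hNN')
    apply unbot'_zero_le
    apply iSup_le
    intro p
    have hAB' : A ≤ Submodule.comap (LinearMap.id (R := R)) B := hAB
    set f : (R ⧸ A) →ₗ[R] (R ⧸ B) := Submodule.mapQ A B LinearMap.id hAB' with hfdef
    have hsurj : Function.Surjective f := by
      intro z; obtain ⟨r, rfl⟩ := Submodule.Quotient.mk_surjective B z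
      exact ⟨Submodule.Quotient.mk r, by rw [hfdef, Submodule.mapQ_apply]; rfl⟩
    have hsm : StrictMono (fun q : Submodule R (R ⧸ B) => Submodule.comap f q) :=
      Monotone.strictMono_of_injective (fun _ _ h => Submodule.comap_mono h)
        (Submodule.comap_injective_of_surjective hsurj)
    have hker' : Submodule.map A.mkQ B ≤ LinearMap.ker f := by
      rw [Submodule.map_le_iff_le_comap]
      intro r hr
      simp only [Submodule.mem_comap, LinearMap.mem_ker, Submodule.mkQ_apply]
      rw [hfdef, Submodule.mapQ_apply]
      exact (Submodule.Quotient.mk_eq_zero B).mpr hr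
    have h := Order.length_le_coheight (x := Submodule.map A.mkQ B) (p := p.map _ hsm)
      (by rw [LTSeries.head_map]
          exact le_trans hker' (Submodule.comap_mono bot_le))
    have hlen : (p.map _ hsm).length = p.length := rfl
    rw [hlen] at h
    exact_mod_cast h
  have h3 : Order.height N + Order.coheight N ≤ mLength R (R ⧸ A) := by
    unfold mLength
    rw [Order.krullDim_eq_iSup_height_add_coheight_of_nonempty, WithBot.unbotD_coe]
    exact le_iSup (fun a => Order.height a + Order.coheight a) N
  exact le_trans (add_le_add h1 h2) h3

/-- the main inequality with a vector of exponents, for an abstract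
closure operation with colon-capturing in each coordinate (for every s.o.p.). -/
theorem stmt3 (R : Type*) [CommRing R] [IsNoetherianRing R] [IsLocalRing R]
    (p : ℕ) (hp : p.Prime) [CharP R p]
    (d : ℕ) (hd : ringKrullDim R = d)
    (c : Ideal R → Ideal R)
    (hext : ∀ I : Ideal R, I ≤ c I) (hmono : Monotone c)
    (hidem : ∀ I : Ideal R, c (c I) = c I)
    (hcc : ∀ (x : Fin d → R), IsSOP R x → ∀ (i : Fin d) (k : Fin d → ℕ) (t s : ℕ),
      0 < t → 0 < s →
      Submodule.colon (c (spow x (Function.update k i (t + s)))) (Ideal.span {x i ^ t})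
        ≤ c (spow x (Function.update k i s)))
    (x : Fin d → R) (hx : IsSOP R x) (k : Fin d → ℕ) (hk : ∀ i, 1 ≤ k i) :
    mLength R (R ⧸ c (spow x k))
      ≥ (∏ i, (k i : ℕ∞)) * mLength R (R ⧸ c (spow x (fun _ => 1))) := by
  classical
  -- generator membership in spow
  have hgen : ∀ (k' : Fin d → ℕ) (i : Fin d), x i ^ k' i ∈ spow x k' :=
    fun k' i => Ideal.subset_span ⟨i, rfl⟩
  have hspow_le : ∀ {a b : Fin d → ℕ}, (∀ j, b j ≤ a j) → spow x a ≤ spow x b := by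
    intro a b h
    rw [spow, Ideal.span_le]
    rintro _ ⟨j, rfl⟩
    have hj := h j
    show x j ^ a j ∈ spow x b
    have : x j ^ a j = x j ^ (a j - b j) * x j ^ b j := by
      rw [← pow_add]; congr 1; omega
    rw [this]
    exact Ideal.mul_mem_left _ _ (Ideal.subset_span ⟨j, rfl⟩)
  have step : ∀ (i : Fin d) (k' : Fin d → ℕ) (t s : ℕ), 0 < t → 0 < s →
      mLength R (R ⧸ c (spow x (Function.update k' i s))) +
        mLength R (R ⧸ c (spow x (Function.update k' i t)))
      ≤ mLength R (R ⧸ c (spow x (Function.update k' i (t + s)))) := by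
    intro i k' t s ht hs
    apply key_lemma _ _ _ (x i ^ t)
    · apply sup_le
      · apply hmono
        apply hspow_le
        intro j
        rcases eq_or_ne j i with rfl | hj
        · simp only [Function.update_self]; omega
        · simp [Function.update_of_ne hj]
      · rw [Ideal.span_le, Set.singleton_subset_iff]
        have : x i ^ t ∈ spow x (Function.update k' i t) := by
          have := hgen (Function.update k' i t) i
          rwa [Function.update_self] at this
        exact hext _ this
    · exact hcc x hx i k' t s ht hs
  have single : ∀ (i : Fin d) (k' : Fin d → ℕ) (n : ℕ), 0 < n →
      (n : ℕ∞) * mLength R (R ⧸ c (spow x (Function.update k' i 1)))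
        ≤ mLength R (R ⧸ c (spow x (Function.update k' i n))) := by
    intro i k' n
    induction n with
    | zero => omega
    | succ n ih =>
      intro _
      rcases Nat.eq_zero_or_pos n with rfl | hn
      · simp
      · have hstep := step i k' 1 n Nat.one_pos hn
        rw [show 1 + n = n + 1 from Nat.add_comm 1 n] at hstep
        calc ((n + 1 : ℕ) : ℕ∞) * mLength R (R ⧸ c (spow x (Function.update k' i 1)))
            = (n : ℕ∞) * mLength R (R ⧸ c (spow x (Function.update k' i 1))) +
              mLength R (R ⧸ c (spow x (Function.update k' i 1))) := by
              push_cast; ring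
          _ ≤ mLength R (R ⧸ c (spow x (Function.update k' i n))) +
              mLength R (R ⧸ c (spow x (Function.update k' i 1))) :=
              add_le_add_left (ih hn) _
          _ ≤ mLength R (R ⧸ c (spow x (Function.update k' i (n + 1)))) := hstep
  have main : ∀ m : ℕ, m ≤ d →
      (∏ j ∈ Finset.univ.filter (fun j : Fin d => (j : ℕ) < m), (k j : ℕ∞)) *
        mLength R (R ⧸ c (spow x (fun j => if (j : ℕ) < m then 1 else k j)))
      ≤ mLength R (R ⧸ c (spow x k)) := by
    intro m
    induction m with
    | zero =>
      intro _
      have h1 : (fun j : Fin d => if (j : ℕ) < 0 then 1 else k j) = k := by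
        funext j; simp
      have h2 : Finset.univ.filter (fun j : Fin d => (j : ℕ) < 0) = ∅ := by
        ext j; simp
      rw [h1, h2, Finset.prod_empty, one_mul]
    | succ m ih =>
      intro hm1
      have hm : m < d := hm1
      set i0 : Fin d := ⟨m, hm⟩ with hi0
      set Km1 : Fin d → ℕ := fun j => if (j : ℕ) < m + 1 then 1 else k j with hKm1
      set Km : Fin d → ℕ := fun j => if (j : ℕ) < m then 1 else k j with hKm
      have hupd : Function.update Km1 i0 (k i0) = Km := by
        funext j
        rcases eq_or_ne j i0 with rfl | hj
        · simp [hKm, Function.update_self, hi0]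
        · have hj' : (j : ℕ) ≠ m := fun h => hj (Fin.ext h)
          simp only [Function.update_of_ne hj, hKm1, hKm]
          by_cases h : (j : ℕ) < m
          · simp [h, Nat.lt_succ_of_lt h]
          · have : ¬ (j : ℕ) < m + 1 := by omega
            simp [h, this]
      have hupd1 : Function.update Km1 i0 1 = Km1 := by
        have h11 : Km1 i0 = 1 := by simp [hKm1, hi0]
        conv_lhs => rw [← h11]
        exact Function.update_eq_self i0 Km1
      have hsingle := single i0 Km1 (k i0) (hk i0)
      rw [hupd, hupd1] at hsingle
      have hfilter : Finset.univ.filter (fun j : Fin d => (j : ℕ) < m + 1)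
          = insert i0 (Finset.univ.filter (fun j : Fin d => (j : ℕ) < m)) := by
        ext j
        simp only [Finset.mem_filter, Finset.mem_univ, true_and, Finset.mem_insert]
        constructor
        · intro h
          rcases Nat.lt_succ_iff_lt_or_eq.mp h with h | h
          · exact Or.inr h
          · exact Or.inl (Fin.ext h)
        · rintro (rfl | h)
          · exact Nat.lt_succ_self m
          · omega
      have hi0notmem : i0 ∉ Finset.univ.filter (fun j : Fin d => (j : ℕ) < m) := by
        simp [hi0]
      rw [hfilter, Finset.prod_insert hi0notmem, mul_assoc]
      calc (k i0 : ℕ∞) * ((∏ j ∈ Finset.univ.filter (fun j : Fin d => (j : ℕ) < m), (k j : ℕ∞)) *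
            mLength R (R ⧸ c (spow x Km1)))
          = (∏ j ∈ Finset.univ.filter (fun j : Fin d => (j : ℕ) < m), (k j : ℕ∞)) *
            ((k i0 : ℕ∞) * mLength R (R ⧸ c (spow x Km1))) := by ring
        _ ≤ (∏ j ∈ Finset.univ.filter (fun j : Fin d => (j : ℕ) < m), (k j : ℕ∞)) *
            mLength R (R ⧸ c (spow x Km)) := mul_le_mul_right hsingle _
        _ ≤ mLength R (R ⧸ c (spow x k)) := ih (Nat.le_of_lt hm)
  have hfin := main d le_rfl
  have h1 : (fun j : Fin d => if (j : ℕ) < d then 1 else k j) = (fun _ => 1 : Fin d → ℕ) := by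
    funext j; simp [j.isLt]
  have h2 : Finset.univ.filter (fun j : Fin d => (j : ℕ) < d) = Finset.univ := by
    ext j; simp [j.isLt]
  rw [h1, h2] at hfin
  exact hfin
end

section
/- Let (R, m) be a Noetherian local ring and c a closure operation on ideals with the colon-capturing property for the system of parameters x₁,…,x_d. If for some k ≥ 1 one has λ(R / c((x₁^k, x₂,…,x_d))) = k · λ(R / c((x₁,…,x_d))), then c((x₁,…,x_d)) = (x₁,…,x_d) + c((x₁^k, x₂,…,x_d)). -/
open IsLocalRing Filter

set_option linter.unusedVariables false

namespace Stmt5Aux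

open Order

/-- Length as height of the top submodule. -/
noncomputable abbrev eL (R M : Type*) [Ring R] [AddCommGroup M] [Module R M] : ℕ∞ :=
  Order.height (⊤ : Submodule R M)

lemma mLength_eq_eL (R M : Type*) [Ring R] [AddCommGroup M] [Module R M] :
    mLength R M = eL R M := by
  rw [mLength, ← Order.height_top_eq_krullDim, WithBot.unbotD_coe]

lemma ht_lt {α : Type*} [Preorder α] {a b : α} (h : a < b) :
    Order.height a + 1 ≤ Order.height b := by
  rw [Order.height_eq_iSup_lt_height b]
  exact le_iSup₂_of_le a h le_rfl

lemma pair_chain {α β : Type*} [Preorder α] [Preorder β] :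
    ∀ (n : ℕ) (A : Fin (n + 1) → α) (B : Fin (n + 1) → β),
      (∀ i : Fin n, A i.castSucc ≤ A i.succ) →
      (∀ i : Fin n, B i.castSucc ≤ B i.succ) →
      (∀ i : Fin n, A i.castSucc < A i.succ ∨ B i.castSucc < B i.succ) →
      (n : ℕ∞) ≤ Order.height (A (Fin.last n)) + Order.height (B (Fin.last n))
  | 0, A, B, _, _, _ => by simp
  | n + 1, A, B, hA, hB, h => by
    have ih := pair_chain n (fun i => A i.castSucc) (fun i => B i.castSucc)
      (fun i => by have := hA i.castSucc; rwa [Fin.succ_castSucc] at this)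
      (fun i => by have := hB i.castSucc; rwa [Fin.succ_castSucc] at this)
      (fun i => by have := h i.castSucc; rwa [Fin.succ_castSucc] at this)
    have hcast : ((n + 1 : ℕ) : ℕ∞) = (n : ℕ∞) + 1 := by push_cast; ring
    have hlastA : A ((Fin.last n).castSucc) ≤ A (Fin.last (n + 1)) := by
      rw [← Fin.succ_last]; exact hA (Fin.last n)
    have hlastB : B ((Fin.last n).castSucc) ≤ B (Fin.last (n + 1)) := by
      rw [← Fin.succ_last]; exact hB (Fin.last n)
    rcases h (Fin.last n) with hlt | hlt
    · rw [Fin.succ_last] at hlt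
      calc ((n + 1 : ℕ) : ℕ∞) = ((n : ℕ∞) + 1 : ℕ∞) := hcast
        _ ≤ (Order.height (A ((Fin.last n).castSucc)) +
              Order.height (B ((Fin.last n).castSucc))) + 1 := add_le_add_left ih 1
        _ = (Order.height (A ((Fin.last n).castSucc)) + 1) +
              Order.height (B ((Fin.last n).castSucc)) := by ring
        _ ≤ Order.height (A (Fin.last (n + 1))) + Order.height (B (Fin.last (n + 1))) :=
            add_le_add (ht_lt hlt) (Order.height_mono hlastB)
    · rw [Fin.succ_last] at hlt
      calc ((n + 1 : ℕ) : ℕ∞) = ((n : ℕ∞) + 1 : ℕ∞) := hcast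
        _ ≤ (Order.height (A ((Fin.last n).castSucc)) +
              Order.height (B ((Fin.last n).castSucc))) + 1 := add_le_add_left ih 1
        _ = Order.height (A ((Fin.last n).castSucc)) +
              (Order.height (B ((Fin.last n).castSucc)) + 1) := by ring
        _ ≤ Order.height (A (Fin.last (n + 1))) + Order.height (B (Fin.last (n + 1))) :=
            add_le_add (Order.height_mono hlastA) (ht_lt hlt)

lemma eL_le_add {R M : Type*} [Ring R] [AddCommGroup M] [Module R M] (N : Submodule R M) :
    eL R M ≤ eL R N + eL R (M ⧸ N) := by
  apply Order.height_le
  intro p _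
  have key := pair_chain p.length (fun i => (p i).comap N.subtype) (fun i => (p i).map N.mkQ)
    (fun i => Submodule.comap_mono (p.step i).le)
    (fun i => Submodule.map_mono (p.step i).le)
    (fun i => by
      by_cases hAeq : (p i.castSucc).comap N.subtype = (p i.succ).comap N.subtype
      · right
        refine lt_of_le_of_ne (Submodule.map_mono (p.step i).le) fun hBeq => ?_
        have hBeq' : Submodule.map N.mkQ (p i.castSucc) = Submodule.map N.mkQ (p i.succ) := hBeq
        have hinf : N ⊓ p i.castSucc = N ⊓ p i.succ := by
          rw [← Submodule.map_comap_subtype, hAeq, Submodule.map_comap_subtype]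
        have hsup : N ⊔ p i.castSucc = N ⊔ p i.succ := by
          rw [← Submodule.comap_map_mkQ, hBeq', Submodule.comap_map_mkQ]
        have h1 : (p i.castSucc ⊔ N) ⊓ p i.succ = p i.castSucc ⊔ (N ⊓ p i.succ) :=
          sup_inf_assoc_of_le _ (p.step i).le
        have hL : (p i.castSucc ⊔ N) ⊓ p i.succ = p i.succ := by
          rw [sup_comm, hsup]; exact inf_eq_right.mpr le_sup_right
        have hR : p i.castSucc ⊔ (N ⊓ p i.succ) = p i.castSucc := by
          rw [← hinf]; exact sup_eq_left.mpr inf_le_right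
        exact (p.step i).ne (hL.symm.trans (h1.trans hR)).symm
      · left; exact lt_of_le_of_ne (Submodule.comap_mono (p.step i).le) hAeq)
  exact key.trans (add_le_add (Order.height_mono le_top) (Order.height_mono le_top))

lemma eL_le_of_injective {R M N : Type*} [Ring R] [AddCommGroup M] [Module R M]
    [AddCommGroup N] [Module R N] (f : M →ₗ[R] N) (hf : Function.Injective f) :
    eL R M ≤ eL R N :=
  (Order.height_le_height_apply_of_strictMono _
    (Submodule.map_strictMono_of_injective hf) ⊤).trans (Order.height_mono le_top)

lemma eL_le_of_surjective {R M N : Type*} [Ring R] [AddCommGroup M] [Module R M]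
    [AddCommGroup N] [Module R N] (f : M →ₗ[R] N) (hf : Function.Surjective f) :
    eL R N ≤ eL R M :=
  (Order.height_le_height_apply_of_strictMono _
    (Submodule.comap_strictMono_of_surjective hf) ⊤).trans (Order.height_mono le_top)

lemma eL_quot_mono {R M : Type*} [Ring R] [AddCommGroup M] [Module R M]
    {A B : Submodule R M} (h : A ≤ B) : eL R (M ⧸ B) ≤ eL R (M ⧸ A) := by
  refine eL_le_of_surjective (Submodule.mapQ A B LinearMap.id h) fun y => ?_
  obtain ⟨r, rfl⟩ := B.mkQ_surjective y
  exact ⟨A.mkQ r, by simp [Submodule.mkQ_apply, Submodule.mapQ_apply]⟩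

lemma eL_ne_top_of_isFiniteLength {R M : Type*} [Ring R] [AddCommGroup M] [Module R M]
    (h : IsFiniteLength R M) : eL R M ≠ ⊤ := by
  induction h with
  | of_subsingleton =>
    rename_i M' _ _ _
    have hss : Subsingleton (Submodule R M') := (Submodule.subsingleton_iff R).mpr inferInstance
    have : eL R M' = 0 := Order.height_eq_zero.mpr fun b _ => (Subsingleton.elim (⊤ : Submodule R M') b).le
    simp [this]
  | of_simple_quotient h ih =>
    rename_i M' _ _ N _
    have hsimple : eL R (M' ⧸ N) ≤ 1 := by
      apply Order.height_le
      intro p _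
      suffices hle : p.length ≤ 1 by exact_mod_cast Nat.cast_le.mpr hle
      by_contra hc
      push_neg at hc
      have h01 : p ⟨0, by omega⟩ < p ⟨1, by omega⟩ := p.strictMono (by simp [Fin.lt_def])
      have h12 : p ⟨1, by omega⟩ < p ⟨2, by omega⟩ := p.strictMono (by simp [Fin.lt_def])
      rcases eq_bot_or_eq_top (p ⟨1, by omega⟩) with hb | ht
      · rw [hb] at h01; exact not_lt_bot h01
      · rw [ht] at h12; exact not_top_lt h12
    have hle : eL R M' ≤ eL R N + 1 :=
      (eL_le_add N).trans (add_le_add_right hsimple _)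
    intro htop
    rw [htop] at hle
    exact WithTop.add_ne_top.mpr ⟨ih, WithTop.one_ne_top⟩ (top_le_iff.mp hle)

lemma isArtinian_of_killed (R M : Type*) [CommRing R] [IsLocalRing R] [AddCommGroup M]
    [Module R M] [Module.Finite R M]
    (h : maximalIdeal R • (⊤ : Submodule R M) = ⊥) : IsArtinian R M := by
  have htor : Module.IsTorsionBySet R M (maximalIdeal R) := by
    intro x r
    have hmem : (r : R) • x ∈ (⊥ : Submodule R M) := by
      rw [← h]; exact Submodule.smul_mem_smul r.2 Submodule.mem_top
    simpa using hmem
  letI : Module (R ⧸ maximalIdeal R) M := htor.module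
  haveI : IsScalarTower R (R ⧸ maximalIdeal R) M := htor.isScalarTower
  letI : Field (R ⧸ maximalIdeal R) := Ideal.Quotient.field _
  haveI : Module.Finite (R ⧸ maximalIdeal R) M :=
    Module.Finite.of_restrictScalars_finite R _ M
  haveI : IsArtinian (R ⧸ maximalIdeal R) M := inferInstance
  let g : Submodule R M → Submodule (R ⧸ maximalIdeal R) M := fun N =>
    { carrier := N
      add_mem' := fun ha hb => N.add_mem ha hb
      zero_mem' := N.zero_mem
      smul_mem' := by
        intro a m hm
        obtain ⟨r, rfl⟩ := Ideal.Quotient.mk_surjective a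
        show (Ideal.Quotient.mk _ r) • m ∈ N
        rw [htor.mk_smul]
        exact N.smul_mem r hm }
  have hg : StrictMono g := fun N N' hlt => by
    rw [← SetLike.coe_ssubset_coe] at hlt ⊢
    exact hlt
  exact hg.wellFoundedLT

lemma isArtinian_of_pow_smul (R : Type*) [CommRing R] [IsNoetherianRing R] [IsLocalRing R] :
    ∀ (n : ℕ) (M : Type*) [AddCommGroup M] [Module R M] [Module.Finite R M],
      (maximalIdeal R ^ n • (⊤ : Submodule R M) = ⊥) → IsArtinian R M := by
  intro n
  induction n with
  | zero =>
    intro M _ _ _ h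
    rw [pow_zero, Ideal.one_eq_top, Submodule.top_smul] at h
    haveI : Subsingleton (Submodule R M) := subsingleton_of_bot_eq_top h.symm
    haveI : Subsingleton M := (Submodule.subsingleton_iff R).mp inferInstance
    exact isArtinian_of_finite
  | succ n ih =>
    intro M _ _ _ h
    haveI : IsNoetherian R M := isNoetherian_of_isNoetherianRing_of_finite R M
    set N : Submodule R M := maximalIdeal R • ⊤ with hN
    haveI : Module.Finite R N := Module.Finite.iff_fg.mpr (IsNoetherian.noetherian N)
    have hNkill : maximalIdeal R ^ n • (⊤ : Submodule R ↥N) = ⊥ := by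
      apply Submodule.map_injective_of_injective N.injective_subtype
      rw [Submodule.map_smul'', Submodule.map_bot, Submodule.map_top, Submodule.range_subtype]
      rw [hN, ← Submodule.smul_assoc, Ideal.smul_eq_mul, ← pow_succ]
      exact h
    haveI : IsArtinian R N := ih N hNkill
    haveI : IsArtinian R (M ⧸ N) := by
      apply isArtinian_of_killed
      rw [eq_bot_iff]
      apply Submodule.smul_le.mpr
      intro r hr m _
      obtain ⟨y, rfl⟩ := N.mkQ_surjective m
      rw [← map_smul, Submodule.mem_bot, Submodule.mkQ_apply, Submodule.Quotient.mk_eq_zero]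
      exact Submodule.smul_mem_smul hr Submodule.mem_top
    exact (isArtinian_iff_submodule_quotient N).mpr ⟨‹_›, ‹_›⟩


/-- Abstract step lemma: for ideals `A ≤ B`, `a ∈ B` with `(A : a) ≤ L`,
the length of `R ⧸ A` is at least `len(R ⧸ L) + len(R ⧸ B)`, with an extra `+1`
when `B ≠ (a) ⊔ A`. -/
lemma step {R : Type*} [CommRing R] (A B L : Ideal R) (a : R)
    (hAB : A ≤ B) (haB : a ∈ B)
    (hcolon : Submodule.colon A (Ideal.span {a}) ≤ L) :
    (eL R (R ⧸ L) + eL R (R ⧸ B) ≤ eL R (R ⧸ A)) ∧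
    (B ≠ Ideal.span {a} ⊔ A →
      (eL R (R ⧸ L) + 1) + eL R (R ⧸ B) ≤ eL R (R ⧸ A)) := by
  set K : Ideal R := Submodule.colon A (Ideal.span {a}) with hK
  set f : R →ₗ[R] R ⧸ A := A.mkQ.comp (LinearMap.lsmul R R a) with hf
  have hker : LinearMap.ker f = K := by
    ext r
    simp only [hf, LinearMap.mem_ker, LinearMap.comp_apply, LinearMap.lsmul_apply,
      Submodule.mkQ_apply, Submodule.Quotient.mk_eq_zero, hK,
      Ideal.mem_colon_span_singleton, smul_eq_mul]
    rw [mul_comm]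
  set g : (R ⧸ K) →ₗ[R] R ⧸ A := K.liftQ f (le_of_eq hker.symm) with hg
  have hginj : Function.Injective g := by
    rw [← LinearMap.ker_eq_bot, hg, Submodule.ker_liftQ_eq_bot]
    exact le_of_eq hker
  have hrange : Submodule.map g ⊤ ≤ Submodule.map A.mkQ (Ideal.span {a}) := by
    rintro _ ⟨z, -, rfl⟩
    obtain ⟨r, rfl⟩ := K.mkQ_surjective z
    exact ⟨a * r, Ideal.mul_mem_right r _ (Ideal.subset_span rfl), rfl⟩
  set T : Submodule R (R ⧸ A) := Submodule.map A.mkQ B with hT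
  set π : (R ⧸ A) →ₗ[R] R ⧸ B := Submodule.mapQ _ _ LinearMap.id hAB with hπ
  have hπs : Function.Surjective π := by
    intro y
    obtain ⟨r, rfl⟩ := B.mkQ_surjective y
    exact ⟨A.mkQ r, rfl⟩
  have hTker : T ≤ LinearMap.ker π := by
    rintro _ ⟨r, hr, rfl⟩
    simp only [hπ, LinearMap.mem_ker, Submodule.mkQ_apply, Submodule.mapQ_apply,
      LinearMap.id_apply, Submodule.Quotient.mk_eq_zero]
    exact hr
  have hco : eL R (R ⧸ B) ≤ Order.coheight T := by
    apply Order.height_le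
    intro p _
    have hhead : T ≤ (p.map (Submodule.comap π)
        (Submodule.comap_strictMono_of_surjective hπs)).head := by
      rw [LTSeries.head_map]
      exact hTker.trans (Submodule.comap_mono bot_le)
    simpa using Order.length_le_coheight hhead
  have hht : ∀ W : Submodule R (R ⧸ A), Submodule.map A.mkQ (Ideal.span {a}) ≤ W →
      eL R (R ⧸ K) ≤ Order.height W := by
    intro W hW
    apply Order.height_le
    intro p hplast
    have hlast : (p.map (Submodule.map g)
        (Submodule.map_strictMono_of_injective hginj)).last ≤ W := by
      rw [LTSeries.last_map, hplast]
      exact hrange.trans hW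
    simpa using Order.length_le_height hlast
  have hlamK : eL R (R ⧸ L) ≤ eL R (R ⧸ K) := eL_quot_mono hcolon
  have hspanB : Ideal.span {a} ≤ B := (Ideal.span_singleton_le_iff_mem _).mpr haB
  have hcomb : ∀ b : ℕ∞, b ≤ Order.height T →
      b + eL R (R ⧸ B) ≤ eL R (R ⧸ A) := by
    intro b hb
    haveI : Nonempty (Submodule R (R ⧸ A)) := ⟨⊤⟩
    have h2 := Order.krullDim_eq_iSup_height_add_coheight_of_nonempty
      (α := Submodule R (R ⧸ A))
    rw [← Order.height_top_eq_krullDim] at h2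
    have h3 : eL R (R ⧸ A) =
        ⨆ W : Submodule R (R ⧸ A), Order.height W + Order.coheight W :=
      WithBot.coe_injective h2
    calc b + eL R (R ⧸ B) ≤ Order.height T + Order.coheight T := add_le_add hb hco
      _ ≤ _ := h3 ▸ le_iSup (fun W => Order.height W + Order.coheight W) T
  constructor
  · exact hcomb _ (hlamK.trans (hht T (Submodule.map_mono hspanB)))
  · intro hne
    set S : Ideal R := Ideal.span {a} ⊔ A with hS
    have hSJ : S ≤ B := sup_le hspanB hAB
    have hSlt : Submodule.map A.mkQ S < T := by
      refine lt_of_le_of_ne (Submodule.map_mono hSJ) fun hEq => hne ?_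
      have hEq2 := congrArg (Submodule.comap A.mkQ) hEq
      rw [Submodule.comap_map_mkQ, Submodule.comap_map_mkQ] at hEq2
      rw [sup_eq_right.mpr le_sup_right, sup_eq_right.mpr hAB] at hEq2
      exact hEq2.symm
    have h1 : eL R (R ⧸ K) ≤ Order.height (Submodule.map A.mkQ S) :=
      hht _ (Submodule.map_mono le_sup_left)
    have h2 := ht_lt hSlt
    exact hcomb _ ((add_le_add (hlamK.trans h1) le_rfl).trans h2)

lemma eL_quot_ne_top (R : Type*) [CommRing R] [IsNoetherianRing R] [IsLocalRing R] {I : Ideal R}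
    (hI : I.radical = maximalIdeal R) : eL R (R ⧸ I) ≠ ⊤ := by
  obtain ⟨n, hn⟩ := Ideal.exists_radical_pow_le_of_fg I (hI ▸ IsNoetherian.noetherian _)
  rw [hI] at hn
  haveI : IsArtinian R (R ⧸ I) := by
    apply isArtinian_of_pow_smul R n
    rw [eq_bot_iff]
    apply Submodule.smul_le.mpr
    intro r hr m _
    obtain ⟨y, rfl⟩ := I.mkQ_surjective m
    rw [← map_smul, Submodule.mem_bot, Submodule.mkQ_apply, Submodule.Quotient.mk_eq_zero]
    simpa [smul_eq_mul] using I.mul_mem_right y (hn hr)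
  haveI : IsNoetherian R (R ⧸ I) := inferInstance
  exact eL_ne_top_of_isFiniteLength (isFiniteLength_iff_isNoetherian_isArtinian.mpr ⟨‹_›, ‹_›⟩)

end Stmt5Aux


/-- equality case. If `λ(R/c((x₁^k,…,x_d))) = k·λ(R/c((x₁,…,x_d)))`
then `c((x₁,…,x_d)) = (x₁,…,x_d) + c((x₁^k, x₂,…,x_d))`. -/
theorem stmt5 (R : Type*) [CommRing R] [IsNoetherianRing R] [IsLocalRing R]
    (c : Ideal R → Ideal R)
    (hext : ∀ I : Ideal R, I ≤ c I)
    (hmono : ∀ I J : Ideal R, I ≤ J → c I ≤ c J)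
    (hidem : ∀ I : Ideal R, c (c I) = c I)
    (d : ℕ) (hd : 0 < d) (x : Fin d → R) (hx : IsSOP R x)
    (hcc : ∀ t s : ℕ, 0 < t → 0 < s →
      Submodule.colon (c (spow x (Function.update (fun _ => 1) ⟨0, hd⟩ (t + s))))
          (Ideal.span {x ⟨0, hd⟩ ^ t})
        ≤ c (spow x (Function.update (fun _ => 1) ⟨0, hd⟩ s)))
    (k : ℕ) (hk : 1 ≤ k)
    (heq : mLength R (R ⧸ c (spow x (Function.update (fun _ => 1) ⟨0, hd⟩ k)))
      = (k : ℕ∞) * mLength R (R ⧸ c (spow x (fun _ => 1)))) :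
    c (spow x (fun _ => 1))
      = spow x (fun _ => 1) ⊔ c (spow x (Function.update (fun _ => 1) ⟨0, hd⟩ k)) := by

  classical
  set x₀ : R := x ⟨0, hd⟩ with hx₀
  set I : ℕ → Ideal R := fun n => spow x (Function.update (fun _ => 1) ⟨0, hd⟩ n) with hI
  set J : ℕ → Ideal R := fun n => c (I n) with hJ
  have hupd1 : Function.update (fun _ => (1 : ℕ)) (⟨0, hd⟩ : Fin d) 1 = fun _ => 1 :=
    Function.update_eq_self _ _
  have hIone : spow x (fun _ => 1) = I 1 := by rw [hI]; simp only [hupd1]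
  have hmem : ∀ n : ℕ, x₀ ^ n ∈ I n := by
    intro n
    exact Ideal.subset_span ⟨⟨0, hd⟩, by simp [hx₀]⟩
  have hIle : ∀ n : ℕ, I (n + 1) ≤ I n := by
    intro n
    apply Ideal.span_le.mpr
    rintro _ ⟨i, rfl⟩
    by_cases hi : i = ⟨0, hd⟩
    · subst hi
      simp only [Function.update_self]
      simpa [pow_succ, hx₀] using (I n).mul_mem_right x₀ (hmem n)
    · simp only [Function.update_of_ne hi]
      exact Ideal.subset_span ⟨i, by simp [Function.update_of_ne hi]⟩
  have hJle : ∀ n : ℕ, J (n + 1) ≤ J n := fun n => hmono _ _ (hIle n)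
  have hspanle : ∀ n : ℕ, Ideal.span {x₀ ^ n} ≤ J n := fun n =>
    (Ideal.span_singleton_le_iff_mem _).mpr (hext _ (hmem n))
  set lam : ℕ∞ := Stmt5Aux.eL R (R ⧸ J 1) with hlam
  have hrad : (I 1).radical = maximalIdeal R := by
    rw [← hx.2]
    congr 1
    rw [hI]
    simp only [hupd1, spow, pow_one]
  have hfinlam : lam ≠ ⊤ := by
    have h1 : Stmt5Aux.eL R (R ⧸ J 1) ≤ Stmt5Aux.eL R (R ⧸ I 1) :=
      Stmt5Aux.eL_quot_mono (hext (I 1))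
    exact fun htop => (Stmt5Aux.eL_quot_ne_top R hrad) (top_le_iff.mp (htop ▸ h1))
  -- main step inequality
  have hstep : ∀ n : ℕ, 1 ≤ n →
      (lam + Stmt5Aux.eL R (R ⧸ J n) ≤ Stmt5Aux.eL R (R ⧸ J (n + 1))) ∧
      (J n ≠ Ideal.span {x₀ ^ n} ⊔ J (n + 1) →
        (lam + 1) + Stmt5Aux.eL R (R ⧸ J n) ≤ Stmt5Aux.eL R (R ⧸ J (n + 1))) := by
    intro n hn
    exact Stmt5Aux.step (J (n + 1)) (J n) (J 1) (x₀ ^ n) (hJle n)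
      (hext _ (hmem n)) (hcc n 1 hn one_pos)
  -- lower bound
  have hlow : ∀ m : ℕ, 1 ≤ m → (m : ℕ∞) * lam ≤ Stmt5Aux.eL R (R ⧸ J m) := by
    intro m hm
    induction m with
    | zero => omega
    | succ m ih =>
      by_cases hm0 : m = 0
      · subst hm0; simp [hlam]
      · have hm1 : 1 ≤ m := by omega
        calc ((m + 1 : ℕ) : ℕ∞) * lam = lam + (m : ℕ∞) * lam := by push_cast; ring
          _ ≤ lam + Stmt5Aux.eL R (R ⧸ J m) := add_le_add_right (ih hm1) _
          _ ≤ _ := (hstep m hm1).1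
  have hkey : ∀ n : ℕ, 1 ≤ n → n + 1 ≤ k → J n = Ideal.span {x₀ ^ n} ⊔ J (n + 1) := by
    intro n hn hnk
    by_contra hne
    have hboost : ∀ m : ℕ, n + 1 ≤ m → (m : ℕ∞) * lam + 1 ≤ Stmt5Aux.eL R (R ⧸ J m) := by
      intro m hm
      induction m with
      | zero => omega
      | succ m ih =>
        by_cases hmn : m = n
        · subst hmn
          calc ((m + 1 : ℕ) : ℕ∞) * lam + 1 = (lam + 1) + (m : ℕ∞) * lam := by push_cast; ring
            _ ≤ (lam + 1) + Stmt5Aux.eL R (R ⧸ J m) := add_le_add_right (hlow m hn) _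
            _ ≤ _ := (hstep m hn).2 hne
        · have hm' : n + 1 ≤ m := by omega
          have hm1 : 1 ≤ m := by omega
          calc ((m + 1 : ℕ) : ℕ∞) * lam + 1 = lam + ((m : ℕ∞) * lam + 1) := by push_cast; ring
            _ ≤ lam + Stmt5Aux.eL R (R ⧸ J m) := add_le_add_right (ih hm') _
            _ ≤ _ := (hstep m hm1).1
    have hk' := hboost k hnk
    have heq' : Stmt5Aux.eL R (R ⧸ J k) = (k : ℕ∞) * lam := by
      have h0 := heq
      rw [Stmt5Aux.mLength_eq_eL, Stmt5Aux.mLength_eq_eL, hIone] at h0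
      exact h0
    rw [heq'] at hk'
    have hne' : (k : ℕ∞) * lam ≠ ⊤ := WithTop.mul_ne_top (WithTop.natCast_ne_top k) hfinlam
    exact absurd ((ENat.add_one_le_iff hne').mp hk') (lt_irrefl _)
  have hfinal : ∀ m : ℕ, 1 ≤ m → m ≤ k → J 1 = Ideal.span {x₀} ⊔ J m := by
    intro m hm hmk
    induction m with
    | zero => omega
    | succ m ih =>
      by_cases hm0 : m = 0
      · subst hm0
        refine (sup_eq_right.mpr ?_).symm
        simpa using hspanle 1
      · have hm1 : 1 ≤ m := by omega
        have h1 := ih hm1 (by omega)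
        have h2 := hkey m hm1 (by omega)
        rw [h1, h2, ← sup_assoc]
        congr 1
        refine sup_eq_left.mpr (Ideal.span_singleton_le_span_singleton.mpr ?_)
        exact dvd_pow_self x₀ (by omega)
  have hmain := hfinal k hk le_rfl
  rw [hIone]
  apply le_antisymm
  · show J 1 ≤ I 1 ⊔ J k
    rw [hmain]
    refine sup_le_sup_right ?_ _
    exact (Ideal.span_singleton_le_iff_mem _).mpr (by simpa using hmem 1)
  · refine sup_le (hext (I 1)) ?_
    show J k ≤ J 1
    rw [hmain]
    exact le_sup_right
end
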